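/- Let Q be a self-adjoint operator on a Hilbert space H and let P be a symmetric operator defined on a dense subspace D that is invariant under (Q²+1)^{-1/2}, with P(Q²+1)^{-1/2} and (Q²+1)^{-1/2}P both defined on D. Then the operator P(Q²+1)^{-1/2} is bounded on D if and only if (Q²+1)^{-1/2}P is bounded on D, and in that case their operator norms agree. -/

import Mathlib

/-!
Because `K` is self-adjoint and `P` is symmetric, `⟪P (K φ), ψ⟫ = ⟪K φ, P ψ⟫ = ⟪φ, K (P ψ)⟫` for
`φ ψ ∈ D`: each of `P K` and `K P` is, on `D`, a restriction of the adjoint of the other. Testing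
`‖x‖` against the dense subspace `D` then shows that a bound for one of them is a bound for the other.
-/

open scoped InnerProductSpace

section

variable {𝕜 E : Type*} [RCLike 𝕜] [NormedAddCommGroup E] [InnerProductSpace 𝕜 E]

theorem norm_le_of_forall_mem_dense_norm_inner_le {s : Set E} (hs : Dense s) {x : E} {M : ℝ}
    (hM : 0 ≤ M) (h : ∀ y ∈ s, ‖⟪x, y⟫_𝕜‖ ≤ M * ‖y‖) : ‖x‖ ≤ M := by
  have hclosed : IsClosed {y : E | ‖⟪x, y⟫_𝕜‖ ≤ M * ‖y‖} :=
    isClosed_le (continuous_const.inner continuous_id).norm (continuous_const.mul continuous_norm)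
  have hall : ∀ y : E, ‖⟪x, y⟫_𝕜‖ ≤ M * ‖y‖ := hs.induction h hclosed
  have hx : ‖x‖ ^ 2 ≤ M * ‖x‖ := by
    simpa [inner_self_eq_norm_sq_to_K (𝕜 := 𝕜)] using hall x
  rcases (norm_nonneg x).eq_or_lt with hx0 | hx0
  · rw [← hx0]; exact hM
  · nlinarith

variable {D : Submodule 𝕜 E} {A B : D → E}

theorem norm_le_of_inner_eq_inner_of_norm_le (hD : Dense (D : Set E))
    (hAB : ∀ φ ψ : D, ⟪A φ, ψ⟫_𝕜 = ⟪(φ : E), B ψ⟫_𝕜) {c : ℝ} (hc : 0 ≤ c)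
    (hB : ∀ ψ : D, ‖B ψ‖ ≤ c * ‖(ψ : E)‖) (φ : D) : ‖A φ‖ ≤ c * ‖(φ : E)‖ := by
  refine norm_le_of_forall_mem_dense_norm_inner_le (𝕜 := 𝕜) hD (by positivity) fun y hy => ?_
  calc ‖⟪A φ, y⟫_𝕜‖ = ‖⟪(φ : E), B ⟨y, hy⟩⟫_𝕜‖ := by rw [← hAB φ ⟨y, hy⟩]
    _ ≤ ‖(φ : E)‖ * ‖B ⟨y, hy⟩‖ := norm_inner_le_norm _ _
    _ ≤ ‖(φ : E)‖ * (c * ‖y‖) := mul_le_mul_of_nonneg_left (hB ⟨y, hy⟩) (norm_nonneg _)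
    _ = c * ‖(φ : E)‖ * ‖y‖ := by ring

theorem forall_norm_le_iff_of_inner_eq_inner (hD : Dense (D : Set E))
    (hAB : ∀ φ ψ : D, ⟪A φ, ψ⟫_𝕜 = ⟪(φ : E), B ψ⟫_𝕜) {c : ℝ} (hc : 0 ≤ c) :
    (∀ φ : D, ‖A φ‖ ≤ c * ‖(φ : E)‖) ↔ ∀ φ : D, ‖B φ‖ ≤ c * ‖(φ : E)‖ := by
  have hBA : ∀ φ ψ : D, ⟪B φ, ψ⟫_𝕜 = ⟪(φ : E), A ψ⟫_𝕜 := fun φ ψ => by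
    rw [← inner_conj_symm, ← hAB, inner_conj_symm]
  exact ⟨norm_le_of_inner_eq_inner_of_norm_le hD hBA hc,
    norm_le_of_inner_eq_inner_of_norm_le hD hAB hc⟩

end

theorem stmt7_general
    {H : Type*} [NormedAddCommGroup H] [InnerProductSpace ℂ H] [CompleteSpace H]
    (K : H →L[ℂ] H) (hKsa : IsSelfAdjoint K)
    (D : Submodule ℂ H) (hD : Dense (D : Set H))
    (P : D →ₗ[ℂ] H)
    (hPsym : ∀ φ ψ : D, (inner ℂ (P φ) (ψ : H) : ℂ) = inner ℂ (φ : H) (P ψ))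
    (hinv : ∀ φ : D, K (φ : H) ∈ D) :
    ((∃ c : ℝ, 0 ≤ c ∧ ∀ φ : D, ‖P ⟨K (φ : H), hinv φ⟩‖ ≤ c * ‖(φ : H)‖) ↔
      (∃ c : ℝ, 0 ≤ c ∧ ∀ φ : D, ‖K (P φ)‖ ≤ c * ‖(φ : H)‖)) ∧
    ∀ c : ℝ, 0 ≤ c →
      ((∀ φ : D, ‖P ⟨K (φ : H), hinv φ⟩‖ ≤ c * ‖(φ : H)‖) ↔
        (∀ φ : D, ‖K (P φ)‖ ≤ c * ‖(φ : H)‖)) := by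
  have hPK_KP : ∀ φ ψ : D, ⟪P ⟨K φ, hinv φ⟩, ψ⟫_ℂ = ⟪(φ : H), K (P ψ)⟫_ℂ := fun φ ψ => by
    rw [hPsym]
    exact hKsa.isSymmetric _ _
  have hbound : ∀ c : ℝ, 0 ≤ c →
      ((∀ φ : D, ‖P ⟨K (φ : H), hinv φ⟩‖ ≤ c * ‖(φ : H)‖) ↔
        (∀ φ : D, ‖K (P φ)‖ ≤ c * ‖(φ : H)‖)) :=
    fun c hc => forall_norm_le_iff_of_inner_eq_inner hD hPK_KP hc
  exact ⟨exists_congr fun c => and_congr_right (hbound c), hbound⟩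

theorem stmt7
    {H : Type*} [NormedAddCommGroup H] [InnerProductSpace ℂ H] [CompleteSpace H]
    (Q : H →ₗ.[ℂ] H) (hQsa : Q.adjoint = Q)
    (K : H →L[ℂ] H) (hKsa : IsSelfAdjoint K)
    (hK : ∀ f : H, ∃ h : K f ∈ Q.domain, ‖Q ⟨K f, h⟩‖ ^ 2 + ‖K f‖ ^ 2 = ‖f‖ ^ 2)
    (D : Submodule ℂ H) (hD : Dense (D : Set H))
    (P : D →ₗ[ℂ] H)
    (hPsym : ∀ φ ψ : D, (inner ℂ (P φ) (ψ : H) : ℂ) = inner ℂ (φ : H) (P ψ))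
    (hinv : ∀ φ : D, K (φ : H) ∈ D) :
    ((∃ c : ℝ, 0 ≤ c ∧ ∀ φ : D, ‖P ⟨K (φ : H), hinv φ⟩‖ ≤ c * ‖(φ : H)‖) ↔
      (∃ c : ℝ, 0 ≤ c ∧ ∀ φ : D, ‖K (P φ)‖ ≤ c * ‖(φ : H)‖)) ∧
    ∀ c : ℝ, 0 ≤ c →
      ((∀ φ : D, ‖P ⟨K (φ : H), hinv φ⟩‖ ≤ c * ‖(φ : H)‖) ↔
        (∀ φ : D, ‖K (P φ)‖ ≤ c * ‖(φ : H)‖)) :=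
  stmt7_general K hKsa D hD P hPsym hinv
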